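/- Consider a weighted STV election on {p, a, b} with votes: p ≻ a ≻ b of weight wᵢ for each wᵢ in a multiset W of positive integers with ∑ W = 4K, a vote a ≻ p ≻ b of weight 3K−1, and a vote b ≻ a ≻ p of weight 2K; tie-breaking order a ≻ b ≻ p. Then the W-votes can be replaced by arbitrary orders ranking p above the current winner so that p wins if and only if there exists W' ⊆ W with ∑_{w∈W'} w = K. -/

import Mathlib

/-- The three candidates. -/
inductive Cand : Type
  | p | a | b
deriving DecidableEq

open Cand

/-- Weighted plurality score: total weight of the votes ranking `x` first. -/
def plScore (E : Multiset (ℕ × List Cand)) (x : Cand) : ℕ :=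
  (E.map fun v => if v.2.head? = some x then v.1 else 0).sum

/-- Weighted pairwise margin `D(x,y)`. -/
def marg (E : Multiset (ℕ × List Cand)) (x y : Cand) : ℤ :=
  (E.map fun v => if v.2.idxOf x < v.2.idxOf y then (v.1 : ℤ) else -(v.1 : ℤ)).sum

/-- Tie-breaking order `a ≻ b ≻ p`. -/
def prioABP : Cand → ℕ
  | Cand.a => 0
  | Cand.b => 1
  | Cand.p => 2

/-- `e` is eliminated in the first STV round: `e` has the lowest plurality score,
ties broken by the tie-breaking order (the less preferred candidate is eliminated). -/
def eliminatedFirst (E : Multiset (ℕ × List Cand)) (prio : Cand → ℕ) (e : Cand) : Prop :=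
  ∀ y, y ≠ e → plScore E e < plScore E y ∨ (plScore E e = plScore E y ∧ prio y < prio e)

/-- `x` beats `y` in the weighted pairwise contest, ties broken by the tie-breaking order. -/
def pairBeats (E : Multiset (ℕ × List Cand)) (prio : Cand → ℕ) (x y : Cand) : Prop :=
  0 < marg E x y ∨ (marg E x y = 0 ∧ prio x < prio y)

/-- STV winner for three candidates: some candidate `e` is eliminated first, and `x`
wins the pairwise contest against the other remaining candidate (vote transfers preserve
the pairwise comparison between the two remaining candidates). -/
def stvWins (E : Multiset (ℕ × List Cand)) (prio : Cand → ℕ) (x : Cand) : Prop :=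
  ∃ e, eliminatedFirst E prio e ∧ x ≠ e ∧ ∀ y, y ≠ e → y ≠ x → pairBeats E prio x y


/-! Every admissible replacement of a `W`-vote puts `p` or `b` first, and none puts `a` first,
so `a` keeps first-place weight `3K − 1` while `p` and `b` share the `4K` weight of the `W`-votes
on top of their fixed `0` and `2K`. If `b` is eliminated, `p` faces `a`, who is preferred by weight
`5K − 1 ≥ 4K` and wins ties; so `p` can only win after `a` is eliminated, which forces `b` to
receive exactly `K` of the `W`-weight: the weights of the votes put under `b` form the required
sub-multiset. Conversely, ranking `b ≻ p ≻ a` in the votes of a `K`-subset and leaving the others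
gives first-place weights `3K, 3K − 1, 3K`, eliminates `a`, and `p` beats `b` by `3K − 1`. -/

section Scores

variable (E F : Multiset (ℕ × List Cand))

@[simp]
lemma plScore_add (x : Cand) : plScore (E + F) x = plScore E x + plScore F x := by
  simp [plScore]

@[simp]
lemma marg_add (x y : Cand) : marg (E + F) x y = marg E x y + marg F x y := by
  simp [marg]

lemma plScore_eq_sum_filter (x : Cand) :
    plScore E x = ((E.filter (·.2.head? = some x)).map Prod.fst).sum := by
  induction E using Multiset.induction_on with
  | empty => simp [plScore]
  | cons v E ih => by_cases h : v.2.head? = some x <;> simp_all [plScore]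

variable {E}

lemma plScore_eq_zero {x : Cand} (h : ∀ v ∈ E, v.2.head? ≠ some x) : plScore E x = 0 :=
  Multiset.sum_eq_zero fun _ hw => by
    obtain ⟨v, hv, rfl⟩ := Multiset.mem_map.1 hw
    simp [h v hv]

lemma plScore_add_plScore {x y : Cand} (hxy : x ≠ y)
    (h : ∀ v ∈ E, v.2.head? = some x ∨ v.2.head? = some y) :
    plScore E x + plScore E y = (E.map Prod.fst).sum := by
  rw [plScore, plScore, ← Multiset.sum_map_add]
  refine congrArg _ (Multiset.map_congr rfl fun v hv => ?_)
  rcases h v hv with h | h <;> simp [h, hxy, hxy.symm]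

lemma marg_eq_of_forall_idxOf_lt {x y : Cand} (h : ∀ v ∈ E, v.2.idxOf x < v.2.idxOf y) :
    marg E x y = (E.map Prod.fst).sum := by
  rw [marg, Multiset.map_congr rfl fun v hv => if_pos (h v hv), Nat.cast_multiset_sum,
    Multiset.map_map]
  rfl

end Scores

@[simp]
lemma plScore_map_const (M : Multiset ℕ) (l : List Cand) (x : Cand) :
    plScore (M.map (·, l)) x = if l.head? = some x then M.sum else 0 := by
  split_ifs with h <;> simp [plScore, h]

@[simp]
lemma marg_map_const (M : Multiset ℕ) (l : List Cand) (x y : Cand) :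
    marg (M.map (·, l)) x y = if l.idxOf x < l.idxOf y then (M.sum : ℤ) else -(M.sum : ℤ) := by
  split_ifs with h <;> simp [marg, h]

def fixedVotes (K : ℕ) : Multiset (ℕ × List Cand) :=
  {(3 * K - 1, [a, p, b]), (2 * K, [b, a, p])}

section FixedVotes

variable (K : ℕ)

@[simp] lemma plScore_fixedVotes_p : plScore (fixedVotes K) p = 0 := by
  simp [fixedVotes, plScore]

@[simp] lemma plScore_fixedVotes_a : plScore (fixedVotes K) a = 3 * K - 1 := by
  simp [fixedVotes, plScore]

@[simp] lemma plScore_fixedVotes_b : plScore (fixedVotes K) b = 2 * K := by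
  simp [fixedVotes, plScore]

@[simp] lemma marg_fixedVotes_p_a : marg (fixedVotes K) p a = -((3 * K - 1 : ℕ) : ℤ) - 2 * K := by
  simp [fixedVotes, marg]; ring

@[simp] lemma marg_fixedVotes_p_b : marg (fixedVotes K) p b = ((3 * K - 1 : ℕ) : ℤ) - 2 * K := by
  simp [fixedVotes, marg]; ring

end FixedVotes

lemma eq_of_perm_of_idxOf_p_lt_idxOf_a {l : List Cand} (hperm : l.Perm [p, a, b])
    (hpa : l.idxOf p < l.idxOf a) : l = [p, a, b] ∨ l = [p, b, a] ∨ l = [b, p, a] := by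
  match l, hperm.length_eq with
  | [x, y, z], _ => cases x <;> cases y <;> cases z <;> revert hperm hpa <;> decide

lemma plScore_b_eq_of_stvWins_p {K : ℕ} (hK : 0 < K) {V : Multiset (ℕ × List Cand)}
    (hV : ∀ v ∈ V, v.2.Perm [p, a, b] ∧ v.2.idxOf p < v.2.idxOf a)
    (hsum : (V.map Prod.fst).sum = 4 * K) (hwin : stvWins (V + fixedVotes K) prioABP p) :
    plScore V b = K := by
  obtain ⟨e, helim, hpe, hbeats⟩ := hwin
  have hheads : ∀ v ∈ V, v.2.head? = some p ∨ v.2.head? = some b := fun v hv => by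
    rcases eq_of_perm_of_idxOf_p_lt_idxOf_a (hV v hv).1 (hV v hv).2 with h | h | h <;> simp [h]
  have hVa : plScore V a = 0 := plScore_eq_zero fun v hv => by
    rcases hheads v hv with h | h <;> simp [h]
  have hVpb := plScore_add_plScore (by decide) hheads
  have hVpa : marg V p a = 4 * K := by
    rw [marg_eq_of_forall_idxOf_lt fun v hv => (hV v hv).2, hsum]
    push_cast; rfl
  cases e with
  | p => exact absurd rfl hpe
  | a =>
    have hb := helim b (by decide)
    have hp := helim p (by decide)
    simp only [plScore_add, plScore_fixedVotes_a, plScore_fixedVotes_b, plScore_fixedVotes_p, hVa,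
      prioABP] at hb hp
    omega
  | b =>
    have hpa := hbeats a (by decide) (by decide)
    simp only [pairBeats, marg_add, hVpa, marg_fixedVotes_p_a, prioABP] at hpa
    omega

lemma stvWins_p_of_sum_eq {K : ℕ} (hK : 0 < K) {W W' : Multiset ℕ} (hle : W' ≤ W)
    (hW' : W'.sum = K) (hW : W.sum = 4 * K) :
    stvWins (W'.map (·, [b, p, a]) + (W - W').map (·, [p, a, b]) + fixedVotes K) prioABP p := by
  set E := W'.map (·, [b, p, a]) + (W - W').map (·, [p, a, b]) + fixedVotes K
  have hrest : (W - W').sum = 3 * K := by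
    have := congrArg Multiset.sum (add_tsub_cancel_of_le hle)
    rw [Multiset.sum_add] at this
    omega
  have hp : plScore E p = 3 * K := by simp [E, hrest]
  have ha : plScore E a = 3 * K - 1 := by simp [E]
  have hb : plScore E b = 3 * K := by simp [E, hW']; omega
  have hpb : marg E p b = 3 * K - 1 := by
    simp [E, hW', hrest]
    omega
  refine ⟨a, fun y hy => ?_, by decide, fun y hya hyp => ?_⟩
  · cases y <;> first | contradiction | (left; omega)
  · cases y <;> first | contradiction | (left; omega)

theorem stmt_7_general (K : ℕ) (hK : 0 < K) (W : Multiset ℕ)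
    (hsum : W.sum = 4 * K) :
    (∃ V : Multiset (ℕ × List Cand), V.map Prod.fst = W ∧
      (∀ v ∈ V, v.2.Perm [p, a, b] ∧ v.2.idxOf p < v.2.idxOf a) ∧
      stvWins (V + {(3 * K - 1, [a, p, b]), (2 * K, [b, a, p])}) prioABP p) ↔
    (∃ W' ≤ W, W'.sum = K) := by
  constructor
  · rintro ⟨V, rfl, hV, hwin⟩
    refine ⟨(V.filter (·.2.head? = some b)).map Prod.fst,
      Multiset.map_le_map (Multiset.filter_le _ _), ?_⟩
    rw [← plScore_eq_sum_filter]
    exact plScore_b_eq_of_stvWins_p hK hV hsum hwin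
  · rintro ⟨W', hle, hW'⟩
    refine ⟨W'.map (·, [b, p, a]) + (W - W').map (·, [p, a, b]), ?_, ?_,
      stvWins_p_of_sum_eq hK hle hW' hsum⟩
    · simpa [Multiset.map_map, Function.comp_def] using add_tsub_cancel_of_le hle
    · simp only [Multiset.mem_add, Multiset.mem_map]
      rintro v (⟨w, -, rfl⟩ | ⟨w, -, rfl⟩) <;> dsimp only <;> decide

/-- STV reduction from `1/4-Partition`: with `W`-votes `p ≻ a ≻ b` (`∑ W = 4K`), a vote
`a ≻ p ≻ b` of weight `3K − 1` and a vote `b ≻ a ≻ p` of weight `2K` (tie-breaking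
`a ≻ b ≻ p`; the current winner is `a`), the `W`-votes can be replaced by arbitrary
linear orders ranking `p` above the current winner `a` so that `p` wins the STV election
iff some sub-multiset of `W` sums to exactly `K`. -/
theorem stmt_7 (K : ℕ) (hK : 0 < K) (W : Multiset ℕ)
    (hpos : ∀ w ∈ W, 0 < w) (hsum : W.sum = 4 * K) :
    (∃ V : Multiset (ℕ × List Cand), V.map Prod.fst = W ∧
      (∀ v ∈ V, v.2.Perm [p, a, b] ∧ v.2.idxOf p < v.2.idxOf a) ∧
      stvWins (V + {(3 * K - 1, [a, p, b]), (2 * K, [b, a, p])}) prioABP p) ↔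
    (∃ W' ≤ W, W'.sum = K) :=
  stmt_7_general K hK W hsum
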